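/- If every chord of a chord diagram is even, then the number of complete smoothings of the diagram having exactly one unicursal component is odd. Precisely: let m be a chord diagram of order n in which every chord is linked with an even number of other chords. Then the number of complete smoothings s (one of the two gluings chosen at each of the n chords) for which the resulting glued curve is connected (has exactly one closed component) is odd. -/
import Mathlib


/-- For a chord diagram, given by a fixed-point-free involution `m` on
`ZMod (2*n)`, the *arc* of a point `x` consists of the points strictly between
`x` and `m x` in the positive cyclic order. -/
def InArc (n : ℕ) (m : ZMod (2 * n) → ZMod (2 * n)) (x z : ZMod (2 * n)) : Prop :=
  0 < (z - x).val ∧ (z - x).val < (m x - x).val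

/-- The graph of a complete smoothing of a chord diagram.  The arc-ends are
the pairs `(z, false)` (the tail of arc `z`, located at the point `z`) and
`(z, true)` (the head of arc `z`, located at the point `z + 1`).  The edges
join the tail and head of each arc and, at each chord with endpoints
`x` and `y = m x`, join the two arc-ends of each pair of the chosen smoothing:
the pairs `{head (x-1), head (y-1)}`, `{tail x, tail y}` when `s x = false` and
the pairs `{head (x-1), tail y}`, `{head (y-1), tail x}` when `s x = true`.
The smoothing has one unicursal component iff this graph is connected. -/
def SmoothGraph (n : ℕ) (m : ZMod (2 * n) → ZMod (2 * n))
    (s : ZMod (2 * n) → Bool) : SimpleGraph (ZMod (2 * n) × Bool) :=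
  SimpleGraph.fromRel (fun e f =>
    (e.2 = false ∧ f.2 = true ∧ e.1 = f.1) ∨
    (∃ x : ZMod (2 * n),
      (s x = false ∧
        ((e = (x - 1, true) ∧ f = (m x - 1, true)) ∨
          (e = (x, false) ∧ f = (m x, false)))) ∨
      (s x = true ∧
        ((e = (x - 1, true) ∧ f = (m x, false)) ∨
          (e = (m x - 1, true) ∧ f = (x, false))))))

namespace ChordAux

open Finset

/-- A finset admitting a fixed-point-free involution has even cardinality. -/
lemma even_card_filter_of_involution {α : Type*} [Fintype α] [DecidableEq α]
    (p : α → Prop) [DecidablePred p] (g : α → α)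
    (hg : ∀ a, p a → p (g a)) (hinv : ∀ a, p a → g (g a) = a)
    (hfp : ∀ a, p a → g a ≠ a) :
    Even (Finset.univ.filter p).card := by
  classical
  let f : Function.End {a // p a} := fun b => ⟨g b.1, hg b.1 b.2⟩
  have hf2 : f ^ 2 ^ 1 = 1 := by
    have h : f * f = 1 := by
      funext b
      exact Subtype.ext (hinv b.1 b.2)
    calc f ^ 2 ^ 1 = f * f := by rw [pow_one, pow_two]
    _ = 1 := h
  have hmod := Equiv.Perm.card_fixedPoints_modEq (p := 2) (n := 1) hf2
  haveI : IsEmpty (Function.fixedPoints f) :=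
    ⟨fun x => hfp x.1.1 x.1.2 (congrArg Subtype.val x.2)⟩
  have h0 : Fintype.card (Function.fixedPoints f) = 0 := Fintype.card_eq_zero
  rw [Nat.ModEq, h0, Nat.zero_mod, Fintype.card_subtype] at hmod
  exact Nat.even_iff.mpr hmod


lemma zmod2_ne_iff : ∀ a b : ZMod 2, a ≠ b ↔ a = b + 1 := by decide

lemma zmod2_add_self : ∀ a : ZMod 2, a + a = 0 := by decide

lemma zmod2_sub_one_ne : ∀ a b : ZMod 2, a - 1 = b → a ≠ b := by decide

lemma zmod2_ne_sub : ∀ a b : ZMod 2, a ≠ b → a - 1 = b ∧ b - 1 = a := by decide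

/-- The alternating function on the cycle. -/
def fstar (n : ℕ) : ZMod (2 * n) → ZMod 2 :=
  fun z => ZMod.castHom (dvd_mul_right 2 n) (ZMod 2) z

lemma fstar_zero (n : ℕ) : fstar n 0 = 0 := map_zero _

lemma fstar_sub_one (n : ℕ) (z : ZMod (2 * n)) : fstar n (z - 1) = fstar n z - 1 := by
  have h := map_sub (ZMod.castHom (dvd_mul_right 2 n) (ZMod 2)) z 1
  rw [map_one] at h
  exact h

lemma fstar_natCast (n : ℕ) (k : ℕ) : fstar n ((k : ℕ) : ZMod (2 * n)) = (k : ZMod 2) :=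
  map_natCast _ k

lemma eq_fstar_of_alternating (n : ℕ) [NeZero (2 * n)] (f : ZMod (2 * n) → ZMod 2)
    (h0 : f 0 = 0) (halt : ∀ z, f (z - 1) ≠ f z) : f = fstar n := by
  have key : ∀ k : ℕ, f ((k : ℕ) : ZMod (2 * n)) = (k : ZMod 2) := by
    intro k
    induction k with
    | zero => simpa using h0
    | succ k ih =>
      have h := halt (((k + 1 : ℕ) : ZMod (2 * n)))
      have e : (((k + 1 : ℕ) : ZMod (2 * n))) - 1 = ((k : ℕ) : ZMod (2 * n)) := by
        push_cast; ring
      rw [e] at h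
      have h2 := (zmod2_ne_iff _ _).mp (Ne.symm h)
      rw [ih] at h2
      rw [h2]
      push_cast; ring
  funext z
  have hz : ((z.val : ℕ) : ZMod (2 * n)) = z := ZMod.natCast_rightInverse z
  calc f z = f ((z.val : ℕ) : ZMod (2 * n)) := by rw [hz]
    _ = ((z.val : ℕ) : ZMod 2) := key _
    _ = fstar n z := by rw [← fstar_natCast n z.val, hz]

/-- Compatibility of a colouring of the arcs with a smoothing. -/
def Compat (n : ℕ) (m : ZMod (2 * n) → ZMod (2 * n))
    (s : ZMod (2 * n) → Bool) (f : ZMod (2 * n) → ZMod 2) : Prop :=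
  ∀ x : ZMod (2 * n),
    (s x = false → f (x - 1) = f (m x - 1) ∧ f x = f (m x)) ∧
    (s x = true → f (x - 1) = f (m x) ∧ f (m x - 1) = f x)

lemma compat_zero (n : ℕ) (m : ZMod (2 * n) → ZMod (2 * n)) (s : ZMod (2 * n) → Bool) :
    Compat n m s 0 :=
  fun _ => ⟨fun _ => ⟨rfl, rfl⟩, fun _ => ⟨rfl, rfl⟩⟩

lemma compat_add {n : ℕ} {m : ZMod (2 * n) → ZMod (2 * n)} {s : ZMod (2 * n) → Bool}
    {f g : ZMod (2 * n) → ZMod 2} (hf : Compat n m s f) (hg : Compat n m s g) :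
    Compat n m s (f + g) := by
  intro x
  refine ⟨fun hs => ?_, fun hs => ?_⟩
  · obtain ⟨h1, h2⟩ := (hf x).1 hs
    obtain ⟨h3, h4⟩ := (hg x).1 hs
    exact ⟨by simp [h1, h3], by simp [h2, h4]⟩
  · obtain ⟨h1, h2⟩ := (hf x).2 hs
    obtain ⟨h3, h4⟩ := (hg x).2 hs
    exact ⟨by simp [h1, h3], by simp [h2, h4]⟩

/-- The canonical smoothing compatible with `fstar`. -/
def sstar (n : ℕ) (m : ZMod (2 * n) → ZMod (2 * n)) : ZMod (2 * n) → Bool :=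
  fun x => decide (fstar n x ≠ fstar n (m x))

lemma sstar_false_iff {n : ℕ} {m : ZMod (2 * n) → ZMod (2 * n)} {x : ZMod (2 * n)} :
    sstar n m x = false ↔ fstar n x = fstar n (m x) := by
  simp [sstar]

lemma sstar_true_iff {n : ℕ} {m : ZMod (2 * n) → ZMod (2 * n)} {x : ZMod (2 * n)} :
    sstar n m x = true ↔ fstar n x ≠ fstar n (m x) := by
  simp [sstar]

lemma sstar_m {n : ℕ} {m : ZMod (2 * n) → ZMod (2 * n)} (hinv : ∀ x, m (m x) = x)
    (x : ZMod (2 * n)) : sstar n m (m x) = sstar n m x := by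
  simp only [sstar, hinv x]
  exact decide_eq_decide.mpr ⟨Ne.symm, Ne.symm⟩

lemma compat_sstar (n : ℕ) (m : ZMod (2 * n) → ZMod (2 * n)) :
    Compat n m (sstar n m) (fstar n) := by
  intro x
  constructor
  · intro hs
    have heq := sstar_false_iff.mp hs
    exact ⟨by rw [fstar_sub_one, fstar_sub_one, heq], heq⟩
  · intro hs
    have hne := sstar_true_iff.mp hs
    obtain ⟨h1, h2⟩ := zmod2_ne_sub _ _ hne
    exact ⟨by rw [fstar_sub_one]; exact h1, by rw [fstar_sub_one]; exact h2⟩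

lemma eq_sstar_of_compat {n : ℕ} {m : ZMod (2 * n) → ZMod (2 * n)}
    {s : ZMod (2 * n) → Bool} (hc : Compat n m s (fstar n)) : s = sstar n m := by
  funext x
  cases hs : s x with
  | false =>
    have h := ((hc x).1 hs).2
    exact (sstar_false_iff.mpr h).symm
  | true =>
    have h := ((hc x).2 hs).1
    rw [fstar_sub_one] at h
    exact (sstar_true_iff.mpr (zmod2_sub_one_ne _ _ h)).symm


section Graph

variable {n : ℕ} {m : ZMod (2 * n) → ZMod (2 * n)} {s : ZMod (2 * n) → Bool}
  {f : ZMod (2 * n) → ZMod 2}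

lemma compat_rel (hc : Compat n m s f) {a b : ZMod (2 * n) × Bool}
    (h : (a.2 = false ∧ b.2 = true ∧ a.1 = b.1) ∨
      (∃ x : ZMod (2 * n),
        (s x = false ∧
          ((a = (x - 1, true) ∧ b = (m x - 1, true)) ∨
            (a = (x, false) ∧ b = (m x, false)))) ∨
        (s x = true ∧
          ((a = (x - 1, true) ∧ b = (m x, false)) ∨
            (a = (m x - 1, true) ∧ b = (x, false)))))) :
    f a.1 = f b.1 := by
  rcases h with ⟨-, -, h⟩ | ⟨x, ⟨hs, ⟨ha, hb⟩ | ⟨ha, hb⟩⟩ | ⟨hs, ⟨ha, hb⟩ | ⟨ha, hb⟩⟩⟩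
  · exact congrArg f h
  · rw [ha, hb]; exact ((hc x).1 hs).1
  · rw [ha, hb]; exact ((hc x).1 hs).2
  · rw [ha, hb]; exact ((hc x).2 hs).1
  · rw [ha, hb]; exact ((hc x).2 hs).2

lemma compat_adj (hc : Compat n m s f) {a b : ZMod (2 * n) × Bool}
    (hadj : (SmoothGraph n m s).Adj a b) : f a.1 = f b.1 := by
  rw [SmoothGraph, SimpleGraph.fromRel_adj] at hadj
  obtain ⟨-, h | h⟩ := hadj
  · exact compat_rel hc h
  · exact (compat_rel hc h).symm

lemma compat_reachable (hc : Compat n m s f) {a b : ZMod (2 * n) × Bool}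
    (h : (SmoothGraph n m s).Reachable a b) : f a.1 = f b.1 := by
  obtain ⟨w⟩ := h
  induction w with
  | nil => rfl
  | cons hadj _ ih => exact (compat_adj hc hadj).trans ih

lemma eq_zero_of_connected (hconn : (SmoothGraph n m s).Connected)
    (hc : Compat n m s f) (h0 : f 0 = 0) : f = 0 := by
  funext z
  have h := compat_reachable hc
    (hconn.preconnected ((0 : ZMod (2 * n)), false) (z, false))
  show f z = 0
  exact (h.symm : f z = f 0).trans h0

lemma connected_of_triv (hn : 0 < n) (hfix : ∀ x, m x ≠ x)
    (htriv : ∀ g : ZMod (2 * n) → ZMod 2, Compat n m s g → g 0 = 0 → g = 0) :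
    (SmoothGraph n m s).Connected := by
  classical
  haveI : NeZero (2 * n) := ⟨by omega⟩
  set G := SmoothGraph n m s with hG
  have hmk : ∀ a b : ZMod (2 * n) × Bool, a ≠ b →
      ((a.2 = false ∧ b.2 = true ∧ a.1 = b.1) ∨
      (∃ x : ZMod (2 * n),
        (s x = false ∧
          ((a = (x - 1, true) ∧ b = (m x - 1, true)) ∨
            (a = (x, false) ∧ b = (m x, false)))) ∨
        (s x = true ∧
          ((a = (x - 1, true) ∧ b = (m x, false)) ∨
            (a = (m x - 1, true) ∧ b = (x, false)))))) → G.Adj a b := by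
    intro a b hne h
    rw [hG, SmoothGraph, SimpleGraph.fromRel_adj]
    exact ⟨hne, Or.inl h⟩
  have harc : ∀ z : ZMod (2 * n), G.Adj (z, false) (z, true) := by
    intro z
    refine hmk _ _ (by simp) (Or.inl ⟨rfl, rfl, rfl⟩)
  have hchordff : ∀ x : ZMod (2 * n), s x = false →
      G.Adj (x - 1, true) (m x - 1, true) := by
    intro x hs
    refine hmk _ _ ?_ (Or.inr ⟨x, Or.inl ⟨hs, Or.inl ⟨rfl, rfl⟩⟩⟩)
    intro h
    exact hfix x (sub_left_inj.mp (congrArg Prod.fst h)).symm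
  have htailff : ∀ x : ZMod (2 * n), s x = false → G.Adj (x, false) (m x, false) := by
    intro x hs
    refine hmk _ _ ?_ (Or.inr ⟨x, Or.inl ⟨hs, Or.inr ⟨rfl, rfl⟩⟩⟩)
    intro h
    exact hfix x (congrArg Prod.fst h).symm
  have htrue1 : ∀ x : ZMod (2 * n), s x = true → G.Adj (x - 1, true) (m x, false) := by
    intro x hs
    refine hmk _ _ ?_ (Or.inr ⟨x, Or.inr ⟨hs, Or.inl ⟨rfl, rfl⟩⟩⟩)
    intro h
    simpa using congrArg Prod.snd h
  have htrue2 : ∀ x : ZMod (2 * n), s x = true → G.Adj (m x - 1, true) (x, false) := by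
    intro x hs
    refine hmk _ _ ?_ (Or.inr ⟨x, Or.inr ⟨hs, Or.inr ⟨rfl, rfl⟩⟩⟩)
    intro h
    simpa using congrArg Prod.snd h
  set v0 : ZMod (2 * n) × Bool := ((0 : ZMod (2 * n)), false) with hv0
  set F : ZMod (2 * n) → ZMod 2 :=
    fun z => if G.Reachable v0 (z, false) then 0 else 1 with hF
  have Fcongr : ∀ {z w : ZMod (2 * n)}, G.Reachable (z, false) (w, false) → F z = F w := by
    intro z w h
    simp only [hF]
    exact if_congr ⟨fun r => r.trans h, fun r => r.trans h.symm⟩ rfl rfl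
  have hcompat : Compat n m s F := by
    intro x
    constructor
    · intro hs
      refine ⟨Fcongr ?_, Fcongr ?_⟩
      · exact ((harc (x - 1)).reachable.trans
          ((hchordff x hs).reachable.trans (harc (m x - 1)).symm.reachable))
      · exact (htailff x hs).reachable
    · intro hs
      refine ⟨Fcongr ?_, Fcongr ?_⟩
      · exact (harc (x - 1)).reachable.trans (htrue1 x hs).reachable
      · exact (harc (m x - 1)).reachable.trans (htrue2 x hs).reachable
  have hF0 : F 0 = 0 := by
    simp only [hF]
    exact if_pos (by exact SimpleGraph.Reachable.refl v0)
  have hall := htriv F hcompat hF0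
  have hreach : ∀ z : ZMod (2 * n), G.Reachable v0 (z, false) := by
    intro z
    by_contra hcon
    have h1 : F z = 1 := by
      simp only [hF]
      exact if_neg hcon
    have h2 : F z = 0 := congrFun hall z
    rw [h1] at h2
    exact one_ne_zero h2
  rw [SimpleGraph.connected_iff_exists_forall_reachable]
  refine ⟨v0, ?_⟩
  rintro ⟨z, b⟩
  cases b
  · exact hreach z
  · exact (hreach z).trans (harc z).reachable

end Graph

end ChordAux

/-- If every chord of a chord diagram is even — i.e. every chord is linked with
an even number of other chords (a chord `{y, m y}` linked with `{x, m x}` has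
exactly one endpoint in the arc of `x`) — then the number of complete
smoothings of the diagram (one of the two gluings chosen at each chord, i.e. a
choice `s` constant on chords) whose glued curve is connected (has exactly one
unicursal component) is odd. -/
theorem even_chord_diagram_has_odd_number_of_connected_smoothings
    (n : ℕ) (hn : 0 < n) (m : ZMod (2 * n) → ZMod (2 * n))
    (hinv : ∀ x, m (m x) = x) (hfix : ∀ x, m x ≠ x)
    (heven : ∀ x : ZMod (2 * n),
      Even (Nat.card {y : ZMod (2 * n) | InArc n m x y ∧ ¬ InArc n m x (m y)})) :
    Odd (Nat.card {s : ZMod (2 * n) → Bool //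
      (∀ x, s (m x) = s x) ∧ (SmoothGraph n m s).Connected}) := by
  classical
  haveI : NeZero (2 * n) := ⟨by omega⟩
  rw [Nat.card_eq_fintype_card, Fintype.card_subtype, Nat.odd_iff, Finset.card_filter]
  set χ : (ZMod (2 * n) → Bool) → (ZMod (2 * n) → ZMod 2) → ℕ :=
    fun s f => if (∀ x, s (m x) = s x) ∧ ChordAux.Compat n m s f ∧ f 0 = 0 then 1 else 0
    with hχ
  have claim1 : ∀ s : ZMod (2 * n) → Bool,
      (∑ f : ZMod (2 * n) → ZMod 2, χ s f) % 2 =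
      (if (∀ x, s (m x) = s x) ∧ (SmoothGraph n m s).Connected then 1 else 0) % 2 := by
    intro s
    by_cases hPs : ∀ x, s (m x) = s x
    · have hsum : (∑ f : ZMod (2 * n) → ZMod 2, χ s f)
          = (Finset.univ.filter (fun f : ZMod (2 * n) → ZMod 2 =>
              ChordAux.Compat n m s f ∧ f 0 = 0)).card := by
        rw [Finset.card_filter]
        refine Finset.sum_congr rfl fun f _ => ?_
        simp only [hχ]
        exact if_congr (and_iff_right hPs) rfl rfl
      by_cases hC : (SmoothGraph n m s).Connected
      · have hfilter : Finset.univ.filter (fun f : ZMod (2 * n) → ZMod 2 =>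
            ChordAux.Compat n m s f ∧ f 0 = 0) = {0} := by
          ext f
          simp only [Finset.mem_filter, Finset.mem_univ, true_and, Finset.mem_singleton]
          constructor
          · rintro ⟨h1, h2⟩
            exact ChordAux.eq_zero_of_connected hC h1 h2
          · rintro rfl
            exact ⟨ChordAux.compat_zero n m s, rfl⟩
        rw [hsum, hfilter, Finset.card_singleton, if_pos ⟨hPs, hC⟩]
      · have hex : ∃ f0 : ZMod (2 * n) → ZMod 2,
            ChordAux.Compat n m s f0 ∧ f0 0 = 0 ∧ f0 ≠ 0 := by
          by_contra hcon
          push_neg at hcon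
          exact hC (ChordAux.connected_of_triv hn hfix hcon)
        obtain ⟨f0, hc0, h00, hne0⟩ := hex
        have heven2 : Even ((Finset.univ.filter (fun f : ZMod (2 * n) → ZMod 2 =>
            ChordAux.Compat n m s f ∧ f 0 = 0)).card) := by
          refine ChordAux.even_card_filter_of_involution _ (fun f => f + f0) ?_ ?_ ?_
          · rintro f ⟨h1, h2⟩
            refine ⟨ChordAux.compat_add h1 hc0, ?_⟩
            show f 0 + f0 0 = 0
            rw [h2, h00, add_zero]
          · intro f _
            funext z
            show f z + f0 z + f0 z = f z
            rw [add_assoc, ChordAux.zmod2_add_self, add_zero]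
          · intro f _ hEq
            apply hne0
            funext z
            have h : f z + f0 z = f z := congrFun hEq z
            show f0 z = 0
            exact add_eq_left.mp h
        rw [Nat.even_iff] at heven2
        rw [hsum, heven2, if_neg (fun hand => hC hand.2)]
    · have hz : ∀ f : ZMod (2 * n) → ZMod 2, χ s f = 0 := by
        intro f
        simp only [hχ]
        exact if_neg (fun h => hPs h.1)
      rw [Finset.sum_congr rfl (fun f _ => hz f), Finset.sum_const_zero,
        if_neg (fun hand => hPs hand.1)]
  have claim2 : ∀ f : ZMod (2 * n) → ZMod 2,
      (∑ s : ZMod (2 * n) → Bool, χ s f) % 2 =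
      (if f = ChordAux.fstar n then 1 else 0) % 2 := by
    intro f
    by_cases hf0 : f 0 = 0
    · by_cases hfe : f = ChordAux.fstar n
      · subst hfe
        have hsum : (∑ s : ZMod (2 * n) → Bool, χ s (ChordAux.fstar n))
            = (Finset.univ.filter (fun s : ZMod (2 * n) → Bool =>
                (∀ x, s (m x) = s x) ∧ ChordAux.Compat n m s (ChordAux.fstar n))).card := by
          rw [Finset.card_filter]
          refine Finset.sum_congr rfl fun s _ => ?_
          simp only [hχ]
          exact if_congr (and_congr_right fun _ => and_iff_left (ChordAux.fstar_zero n)) rfl rfl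
        have hfilter : Finset.univ.filter (fun s : ZMod (2 * n) → Bool =>
            (∀ x, s (m x) = s x) ∧ ChordAux.Compat n m s (ChordAux.fstar n))
            = {ChordAux.sstar n m} := by
          ext s
          simp only [Finset.mem_filter, Finset.mem_univ, true_and, Finset.mem_singleton]
          constructor
          · rintro ⟨-, h2⟩
            exact ChordAux.eq_sstar_of_compat h2
          · rintro rfl
            exact ⟨ChordAux.sstar_m hinv, ChordAux.compat_sstar n m⟩
        rw [hsum, hfilter, Finset.card_singleton, if_pos rfl]
      · have hx0 : ∃ x0 : ZMod (2 * n), f (x0 - 1) = f x0 := by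
          by_contra hcon
          push_neg at hcon
          exact hfe (ChordAux.eq_fstar_of_alternating n f hf0 hcon)
        obtain ⟨x0, hx0⟩ := hx0
        have hsum : (∑ s : ZMod (2 * n) → Bool, χ s f)
            = (Finset.univ.filter (fun s : ZMod (2 * n) → Bool =>
                (∀ x, s (m x) = s x) ∧ ChordAux.Compat n m s f)).card := by
          rw [Finset.card_filter]
          refine Finset.sum_congr rfl fun s _ => ?_
          simp only [hχ]
          exact if_congr (and_congr_right fun _ => and_iff_left hf0) rfl rfl
        have hmem : ∀ z : ZMod (2 * n), (m z = x0 ∨ m z = m x0) ↔ (z = x0 ∨ z = m x0) := by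
          intro z
          constructor
          · rintro (h | h)
            · exact Or.inr (by rw [← h, hinv])
            · exact Or.inl (by rw [← hinv z, h, hinv])
          · rintro (rfl | rfl)
            · exact Or.inr rfl
            · exact Or.inl (hinv x0)
        have hswap : ∀ x : ZMod (2 * n), (x = x0 ∨ x = m x0) →
            ((f (x - 1) = f (m x - 1) ∧ f x = f (m x)) ↔
             (f (x - 1) = f (m x) ∧ f (m x - 1) = f x)) := by
          rintro x (rfl | rfl)
          · constructor
            · rintro ⟨e1, e2⟩
              exact ⟨hx0.trans e2, e1.symm.trans hx0⟩
            · rintro ⟨t1, t2⟩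
              exact ⟨hx0.trans t2.symm, hx0.symm.trans t1⟩
          · rw [hinv x0]
            constructor
            · rintro ⟨c1, c2⟩
              exact ⟨c1.trans hx0, hx0.trans c2.symm⟩
            · rintro ⟨d1, d2⟩
              exact ⟨d1.trans hx0.symm, d2.symm.trans hx0⟩
        have heven2 : Even ((Finset.univ.filter (fun s : ZMod (2 * n) → Bool =>
            (∀ x, s (m x) = s x) ∧ ChordAux.Compat n m s f)).card) := by
          refine ChordAux.even_card_filter_of_involution _
            (fun s => fun z => if z = x0 ∨ z = m x0 then !(s z) else s z) ?_ ?_ ?_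
          · rintro s ⟨h1, h2⟩
            constructor
            · intro x
              by_cases hx : x = x0 ∨ x = m x0
              · simp only [if_pos ((hmem x).mpr hx), if_pos hx, h1 x]
              · simp only [if_neg (fun h => hx ((hmem x).mp h)), if_neg hx]
                exact h1 x
            · intro x
              by_cases hx : x = x0 ∨ x = m x0
              · refine ⟨fun hgs => ?_, fun hgs => ?_⟩
                · simp only [if_pos hx] at hgs
                  have hsx : s x = true := by revert hgs; cases s x <;> simp
                  exact (hswap x hx).mpr ((h2 x).2 hsx)
                · simp only [if_pos hx] at hgs
                  have hsx : s x = false := by revert hgs; cases s x <;> simp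
                  exact (hswap x hx).mp ((h2 x).1 hsx)
              · refine ⟨fun hgs => ?_, fun hgs => ?_⟩
                · simp only [if_neg hx] at hgs
                  exact (h2 x).1 hgs
                · simp only [if_neg hx] at hgs
                  exact (h2 x).2 hgs
          · intro s _
            funext z
            by_cases hz : z = x0 ∨ z = m x0
            · simp only [if_pos hz, Bool.not_not]
            · simp only [if_neg hz]
          · intro s _ hEq
            have h := congrFun hEq x0
            simp only [if_pos (Or.inl (rfl : x0 = x0))] at h
            cases hsx : s x0 <;> rw [hsx] at h <;> exact Bool.noConfusion h
        rw [Nat.even_iff] at heven2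
        rw [hsum, heven2, if_neg hfe]
    · have hz : ∀ s : ZMod (2 * n) → Bool, χ s f = 0 := by
        intro s
        simp only [hχ]
        exact if_neg (fun h => hf0 h.2.2)
      have hfe : f ≠ ChordAux.fstar n := fun h => hf0 (by rw [h]; exact ChordAux.fstar_zero n)
      rw [Finset.sum_congr rfl (fun s _ => hz s), Finset.sum_const_zero, if_neg hfe]
  have e1 : (∑ s : ZMod (2 * n) → Bool,
      if (∀ x, s (m x) = s x) ∧ (SmoothGraph n m s).Connected then 1 else 0) % 2
      = (∑ s : ZMod (2 * n) → Bool, ∑ f : ZMod (2 * n) → ZMod 2, χ s f) % 2 := by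
    rw [Finset.sum_nat_mod Finset.univ 2
      (fun s => if (∀ x, s (m x) = s x) ∧ (SmoothGraph n m s).Connected then 1 else 0),
      Finset.sum_nat_mod Finset.univ 2 (fun s => ∑ f : ZMod (2 * n) → ZMod 2, χ s f)]
    congr 1
    exact Finset.sum_congr rfl fun s _ => (claim1 s).symm
  have e2 : (∑ s : ZMod (2 * n) → Bool, ∑ f : ZMod (2 * n) → ZMod 2, χ s f)
      = ∑ f : ZMod (2 * n) → ZMod 2, ∑ s : ZMod (2 * n) → Bool, χ s f :=
    Finset.sum_comm
  have e3 : (∑ f : ZMod (2 * n) → ZMod 2, ∑ s : ZMod (2 * n) → Bool, χ s f) % 2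
      = (∑ f : ZMod (2 * n) → ZMod 2, if f = ChordAux.fstar n then 1 else 0) % 2 := by
    rw [Finset.sum_nat_mod Finset.univ 2
      (fun f => ∑ s : ZMod (2 * n) → Bool, χ s f),
      Finset.sum_nat_mod Finset.univ 2
      (fun f : ZMod (2 * n) → ZMod 2 => if f = ChordAux.fstar n then 1 else 0)]
    congr 1
    exact Finset.sum_congr rfl fun f _ => claim2 f
  have e4 : (∑ f : ZMod (2 * n) → ZMod 2, if f = ChordAux.fstar n then 1 else 0) = 1 := by
    rw [Finset.sum_ite_eq' Finset.univ (ChordAux.fstar n) (fun _ => 1),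
      if_pos (Finset.mem_univ _)]
  rw [e1, e2, e3, e4]
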